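/- There exists a constant c > 0 such that for all y ≥ 0, both (1 − J₀(y))² ≥ c · (2 − 2 J₀(y) − 2 (J₀'(y))²) and (1 + J₀(y))² ≥ c · (2 + 2 J₀(y) − 2 (J₀'(y))²) hold. Equivalently, the infima over y ∈ (0, ∞) of (1 ∓ J₀(y)) / √(2 ∓ 2 J₀(y) − 2 (J₀'(y))²) are both strictly positive. -/

import Mathlib

/-!
Write `J₀(y) = F₀(y²/4)` and `J₀'(y) = -(y/2) F₁(y²/4)` with `F_m(x) = Σ (-1)^j x^j / (j! (j+m)!)`.
The recurrence `F₁ - F₀ = x F₂` makes the energy `J₀² + J₀'² = F₀(x)² + x F₁(x)²` nonincreasing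
in `x` (its derivative is `-F₁²`), and it is below `1/4` at `y = 3`; hence `|J₀| ≤ 1/2` for `y ≥ 3`.
For `y ≤ 3` truncations of `F₀` give `J₀ ≥ -1/2`, and `J₀ ≤ 1/2` once `y ≥ 2`. Whenever
`a = 1 ∓ J₀ ≥ 1/2` the inequality holds with `c = 1/4`, since `a² - a/2 ≥ 0`. In the remaining
range `y ≤ 2` of the minus case, `1 - J₀` and `J₀'²` both behave like `y²/4`, which suffices.
-/

open Real

/-- The Bessel function of the first kind of order `0`:
`J₀(y) = Σ_{j≥0} (−1)^j/(j!)² (y/2)^{2j}`. -/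
noncomputable def besselJ0 (y : ℝ) : ℝ :=
  ∑' j : ℕ, (-1) ^ j / ((j.factorial : ℝ)) ^ 2 * (y / 2) ^ (2 * j)

open Nat

section FactorialDecay

variable {a : ℕ → ℝ}

theorem summable_mul_pow_of_abs_le_inv_factorial (ha : ∀ j, |a j| ≤ (j ! : ℝ)⁻¹) (x : ℝ) :
    Summable fun j => a j * x ^ j := by
  refine .of_norm_bounded (Real.summable_pow_div_factorial |x|) fun j => ?_
  rw [norm_mul, norm_pow, Real.norm_eq_abs, Real.norm_eq_abs, div_eq_inv_mul]
  exact mul_le_mul_of_nonneg_right (ha j) (by positivity)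

theorem hasDerivAt_tsum_mul_pow_of_abs_le_inv_factorial (ha : ∀ j, |a j| ≤ (j ! : ℝ)⁻¹)
    (x : ℝ) :
    HasDerivAt (fun t => ∑' j, a j * t ^ j) (∑' j, (j + 1) * a (j + 1) * x ^ j) x := by
  set R := |x| + 1
  have hR : 1 ≤ R := le_add_of_nonneg_left (abs_nonneg x)
  have hxR : x ∈ Metric.ball 0 R := by simp [R]
  have hbound : ∀ j, ∀ t ∈ Metric.ball (0 : ℝ) R,
      ‖a j * (j * t ^ (j - 1))‖ ≤ (2 * R) ^ j / j ! := by
    intro j t ht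
    rw [mem_ball_zero_iff, Real.norm_eq_abs] at ht
    have hj : (j : ℝ) ≤ 2 ^ j := by exact_mod_cast (Nat.lt_two_pow_self).le
    have ht' : |t| ^ (j - 1) ≤ R ^ j :=
      (pow_le_pow_left₀ (abs_nonneg t) ht.le _).trans (pow_le_pow_right₀ hR (Nat.sub_le j 1))
    rw [norm_mul, norm_mul, norm_pow, Real.norm_eq_abs, Real.norm_eq_abs, Real.norm_eq_abs,
      Nat.abs_cast, mul_pow, div_eq_inv_mul]
    exact mul_le_mul (ha j) (mul_le_mul hj ht' (by positivity) (by positivity))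
      (by positivity) (by positivity)
  have hsum := Real.summable_pow_div_factorial (2 * R)
  have hderiv := hasDerivAt_tsum_of_isPreconnected hsum Metric.isOpen_ball
    (convex_ball (0 : ℝ) R).isPreconnected (fun j t _ => (hasDerivAt_pow j t).const_mul (a j))
    hbound (Metric.mem_ball_self (by linarith)) (summable_mul_pow_of_abs_le_inv_factorial ha 0) hxR
  refine hderiv.congr_deriv ?_
  rw [(Summable.of_norm_bounded hsum fun j => hbound j x hxR).tsum_eq_zero_add]
  simp only [CharP.cast_eq_zero, zero_mul, mul_zero, zero_add, Nat.cast_succ,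
    Nat.add_sub_cancel]
  exact tsum_congr fun j => by ring

end FactorialDecay

theorem norm_tsum_sub_sum_range_le_of_geometric {E : Type*} [NormedAddCommGroup E]
    {f : ℕ → E} (hf : Summable f) (N : ℕ) {C r : ℝ} (hr₀ : 0 ≤ r) (hr₁ : r < 1)
    (hbound : ∀ k, ‖f (k + N)‖ ≤ C * r ^ k) :
    ‖∑' j, f j - ∑ j ∈ Finset.range N, f j‖ ≤ C / (1 - r) := by
  rw [← hf.sum_add_tsum_nat_add N, add_sub_cancel_left, div_eq_mul_inv]
  exact tsum_of_norm_bounded ((hasSum_geometric_of_lt_one hr₀ hr₁).mul_left C) hbound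

noncomputable def besselCoeff (m j : ℕ) : ℝ := (-1) ^ j / (j ! * (j + m)!)

-- `(y / 2) ^ m * besselSeries m (y ^ 2 / 4)` is the Bessel function `J_m(y)`.
noncomputable def besselSeries (m : ℕ) (x : ℝ) : ℝ := ∑' j, besselCoeff m j * x ^ j

theorem abs_besselCoeff (m j : ℕ) : |besselCoeff m j| = ((j ! * (j + m)! : ℕ) : ℝ)⁻¹ := by
  simp [besselCoeff, abs_div]

theorem abs_besselCoeff_le (m j : ℕ) : |besselCoeff m j| ≤ (j ! : ℝ)⁻¹ := by
  rw [abs_besselCoeff]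
  gcongr
  exact_mod_cast Nat.le_mul_of_pos_right _ (factorial_pos _)

theorem summable_besselSeries (m : ℕ) (x : ℝ) : Summable fun j => besselCoeff m j * x ^ j :=
  summable_mul_pow_of_abs_le_inv_factorial (abs_besselCoeff_le m) x

theorem succ_mul_besselCoeff_succ (m j : ℕ) :
    (j + 1) * besselCoeff m (j + 1) = -besselCoeff (m + 1) j := by
  rw [besselCoeff, besselCoeff, show j + 1 + m = j + (m + 1) by ring, factorial_succ]
  push_cast
  field_simp
  ring

theorem hasDerivAt_besselSeries (m : ℕ) (x : ℝ) :
    HasDerivAt (besselSeries m) (-besselSeries (m + 1) x) x := by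
  refine (hasDerivAt_tsum_mul_pow_of_abs_le_inv_factorial (abs_besselCoeff_le m) x).congr_deriv ?_
  simp only [succ_mul_besselCoeff_succ, neg_mul, tsum_neg, besselSeries]

theorem besselCoeff_recurrence (m j : ℕ) :
    (m + 1) * besselCoeff (m + 1) (j + 1) - besselCoeff m (j + 1) = besselCoeff (m + 2) j := by
  simp only [besselCoeff, show j + 1 + (m + 1) = j + m + 1 + 1 by ring, factorial_succ,
    show j + 1 + m = j + m + 1 by ring, show j + (m + 2) = j + m + 1 + 1 by ring]
  push_cast
  field_simp
  ring

theorem besselSeries_recurrence (m : ℕ) (x : ℝ) :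
    (m + 1) * besselSeries (m + 1) x - besselSeries m x = x * besselSeries (m + 2) x := by
  set d : ℕ → ℝ := fun j => (m + 1) * besselCoeff (m + 1) j - besselCoeff m j
  have hzero : d 0 = 0 := by
    simp only [d, besselCoeff, pow_zero, factorial_zero, zero_add, factorial_succ]
    push_cast
    field_simp
    ring
  have hshift : HasSum (fun j => d j * x ^ j) (x * besselSeries (m + 2) x) := by
    have hterm : (fun j => d (j + 1) * x ^ (j + 1)) =
        fun j => x * (besselCoeff (m + 2) j * x ^ j) := by
      ext j
      rw [← besselCoeff_recurrence, pow_succ]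
      ring
    rw [← hasSum_nat_add_iff' 1, hterm]
    simp only [Finset.range_one, Finset.sum_singleton, hzero, zero_mul, sub_zero]
    exact (summable_besselSeries (m + 2) x).hasSum.mul_left x
  have hsum := (summable_besselSeries (m + 1) x).mul_left ((m : ℝ) + 1)
  rw [← hshift.tsum_eq, besselSeries, besselSeries, ← tsum_mul_left,
    ← hsum.tsum_sub (summable_besselSeries m x)]
  exact tsum_congr fun j => by ring

theorem besselJ0_eq_besselSeries (y : ℝ) : besselJ0 y = besselSeries 0 (y ^ 2 / 4) := by
  refine tsum_congr fun j => ?_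
  rw [besselCoeff, add_zero, pow_mul, ← sq]
  ring

theorem hasDerivAt_besselJ0 (y : ℝ) :
    HasDerivAt besselJ0 (-(y / 2) * besselSeries 1 (y ^ 2 / 4)) y := by
  have hinner : HasDerivAt (fun y : ℝ => y ^ 2 / 4) (y / 2) y := by
    refine ((hasDerivAt_pow 2 y).div_const 4).congr_deriv ?_
    norm_num
    ring
  rw [show besselJ0 = fun y => besselSeries 0 (y ^ 2 / 4) from funext besselJ0_eq_besselSeries]
  refine ((hasDerivAt_besselSeries 0 (y ^ 2 / 4)).comp y hinner).congr_deriv ?_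
  ring

theorem deriv_besselJ0_sq (y : ℝ) :
    deriv besselJ0 y ^ 2 = y ^ 2 / 4 * besselSeries 1 (y ^ 2 / 4) ^ 2 := by
  rw [(hasDerivAt_besselJ0 y).deriv]
  ring

-- At `x = y ^ 2 / 4` this is `J₀(y) ^ 2 + J₀'(y) ^ 2`.
noncomputable def besselEnergy (x : ℝ) : ℝ := besselSeries 0 x ^ 2 + x * besselSeries 1 x ^ 2

theorem hasDerivAt_besselEnergy (x : ℝ) :
    HasDerivAt besselEnergy (-besselSeries 1 x ^ 2) x := by
  have hrec := besselSeries_recurrence 0 x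
  have h0 := hasDerivAt_besselSeries 0 x
  have h1 := hasDerivAt_besselSeries 1 x
  norm_num at hrec h0 h1
  refine ((h0.pow 2).add ((hasDerivAt_id x).mul (h1.pow 2))).congr_deriv ?_
  simp only [id, Pi.pow_apply]
  linear_combination 2 * besselSeries 1 x * hrec

theorem antitone_besselEnergy : Antitone besselEnergy :=
  antitone_of_hasDerivAt_nonpos hasDerivAt_besselEnergy fun x => by
    simpa using sq_nonneg (besselSeries 1 x)

theorem factorial_mul_factorial_mul_pow_le (m N k : ℕ) :
    N ! * (N + m)! * ((N + 1) * (N + m + 1)) ^ k ≤ (k + N)! * (k + N + m)! := by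
  rw [mul_pow, mul_mul_mul_comm, add_comm k N, add_right_comm N k m]
  exact Nat.mul_le_mul factorial_mul_pow_le_factorial factorial_mul_pow_le_factorial

theorem abs_besselSeries_sub_sum_le (m N : ℕ) {x M : ℝ} (hx : 0 ≤ x) (hxM : x ≤ M)
    (hM : M < (N + 1) * (N + m + 1)) :
    |besselSeries m x - ∑ j ∈ Finset.range N, besselCoeff m j * x ^ j| ≤
      x ^ N / (N ! * (N + m)!) / (1 - M / ((N + 1) * (N + m + 1))) := by
  have hP : (0 : ℝ) < (N + 1) * (N + m + 1) := by positivity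
  have hM₀ : 0 ≤ M := hx.trans hxM
  refine norm_tsum_sub_sum_range_le_of_geometric (summable_besselSeries m x) N
    (div_nonneg hM₀ hP.le) ((div_lt_one hP).2 hM) fun k => ?_
  have hfac : (N ! * (N + m)! : ℝ) * ((N + 1) * (N + m + 1)) ^ k ≤ (k + N)! * (k + N + m)! := by
    exact_mod_cast factorial_mul_factorial_mul_pow_le m N k
  rw [Real.norm_eq_abs, abs_mul, abs_besselCoeff, abs_pow, abs_of_nonneg hx]
  push_cast
  calc ((k + N)! * (k + N + m)! : ℝ)⁻¹ * x ^ (k + N)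
      = x ^ N * x ^ k / ((k + N)! * (k + N + m)!) := by ring
    _ ≤ x ^ N * M ^ k / (N ! * (N + m)! * ((N + 1) * (N + m + 1)) ^ k) := by
      gcongr
    _ = _ := by
      rw [div_pow]
      field_simp

theorem neg_half_le_besselSeries_zero {x : ℝ} (hx₀ : 0 ≤ x) (hx : x ≤ 9 / 4) :
    -(1 / 2) ≤ besselSeries 0 x := by
  have h := abs_besselSeries_sub_sum_le 0 4 hx₀ hx (by norm_num)
  norm_num [Finset.sum_range_succ, besselCoeff, factorial, abs_le] at h
  nlinarith [h.1, pow_nonneg hx₀ 2, pow_nonneg hx₀ 3, pow_nonneg hx₀ 4,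
    mul_nonneg (mul_nonneg hx₀ hx₀) (sub_nonneg.2 hx),
    mul_nonneg (pow_nonneg hx₀ 3) (sub_nonneg.2 hx)]

theorem besselSeries_zero_le_half {x : ℝ} (hx₁ : 1 ≤ x) (hx : x ≤ 9 / 4) :
    besselSeries 0 x ≤ 1 / 2 := by
  have hx₀ : 0 ≤ x := by linarith
  have h := abs_besselSeries_sub_sum_le 0 5 hx₀ hx (by norm_num)
  norm_num [Finset.sum_range_succ, besselCoeff, factorial, abs_le] at h
  have hI := mul_nonneg (sub_nonneg.2 hx₁) (sub_nonneg.2 hx)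
  nlinarith [h.2, hI, mul_nonneg hI hx₀, mul_nonneg (mul_nonneg hI hx₀) hx₀,
    mul_nonneg (mul_nonneg (mul_nonneg hI hx₀) hx₀) hx₀]

theorem besselEnergy_nine_fourths_le : besselEnergy (9 / 4) ≤ 1 / 4 := by
  have h₀ := abs_besselSeries_sub_sum_le 0 6 (x := 9 / 4) (by norm_num) le_rfl (by norm_num)
  have h₁ := abs_besselSeries_sub_sum_le 1 5 (x := 9 / 4) (by norm_num) le_rfl (by norm_num)
  norm_num [Finset.sum_range_succ, besselCoeff, factorial, abs_le] at h₀ h₁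
  rw [besselEnergy]
  nlinarith [h₀.1, h₀.2, h₁.1, h₁.2]

theorem one_sub_besselSeries_zero_le {x : ℝ} (hx₀ : 0 ≤ x) (hx₁ : x ≤ 1) :
    1 - besselSeries 0 x ≤ 2 * (1 - besselSeries 0 x) ^ 2 + x * besselSeries 1 x ^ 2 := by
  have h₀ := abs_besselSeries_sub_sum_le 0 3 hx₀ hx₁ (by norm_num)
  have h₁ := abs_besselSeries_sub_sum_le 1 3 hx₀ hx₁ (by norm_num)
  norm_num [Finset.sum_range_succ, besselCoeff, factorial, abs_le] at h₀ h₁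
  set A := 1 - besselSeries 0 x
  have hx₂ : x ^ 2 ≤ x := by nlinarith
  have hx₃ : x ^ 3 ≤ x ^ 2 := by nlinarith
  have hA : 0 ≤ A ∧ A ≤ x := by constructor <;> nlinarith [h₀.1, h₀.2]
  have hA₂ : 0 ≤ 2 * A - x + x ^ 2 / 4 := by nlinarith [h₀.1, h₀.2]
  have hG : 1 - x / 2 ≤ besselSeries 1 x := by nlinarith [h₁.1, h₁.2]
  calc A ≤ 2 * A ^ 2 + A * (1 - x / 2) ^ 2 := by nlinarith [mul_nonneg hA.1 hA₂]
    _ ≤ 2 * A ^ 2 + x * (1 - x / 2) ^ 2 := by gcongr; exact hA.2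
    _ ≤ 2 * A ^ 2 + x * besselSeries 1 x ^ 2 := by gcongr; linarith

theorem abs_besselSeries_zero_le_half {x : ℝ} (hx : 9 / 4 ≤ x) : |besselSeries 0 x| ≤ 1 / 2 := by
  refine abs_le_of_sq_le_sq ?_ (by norm_num)
  have hE := (antitone_besselEnergy hx).trans besselEnergy_nine_fourths_le
  rw [besselEnergy] at hE
  nlinarith [sq_nonneg (besselSeries 1 x)]

theorem neg_half_le_besselJ0 {y : ℝ} (hy : 0 ≤ y) : -(1 / 2) ≤ besselJ0 y := by
  rw [besselJ0_eq_besselSeries]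
  rcases le_total y 3 with hy₃ | hy₃
  · exact neg_half_le_besselSeries_zero (by positivity) (by nlinarith)
  · exact (abs_le.1 (abs_besselSeries_zero_le_half (by nlinarith))).1

theorem besselJ0_le_half {y : ℝ} (hy : 2 ≤ y) : besselJ0 y ≤ 1 / 2 := by
  rw [besselJ0_eq_besselSeries]
  rcases le_total y 3 with hy₃ | hy₃
  · exact besselSeries_zero_le_half (by nlinarith) (by nlinarith)
  · exact (abs_le.1 (abs_besselSeries_zero_le_half (by nlinarith))).2

/-- There is `c > 0` such that for all `y ≥ 0`,
`(1 − J₀(y))² ≥ c(2 − 2J₀(y) − 2J₀'(y)²)` and `(1 + J₀(y))² ≥ c(2 + 2J₀(y) − 2J₀'(y)²)`. -/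
theorem bessel_ratio_infima_pos :
    ∃ c : ℝ, 0 < c ∧ ∀ y : ℝ, 0 ≤ y →
      (1 - besselJ0 y) ^ 2 ≥ c * (2 - 2 * besselJ0 y - 2 * (deriv besselJ0 y) ^ 2) ∧
      (1 + besselJ0 y) ^ 2 ≥ c * (2 + 2 * besselJ0 y - 2 * (deriv besselJ0 y) ^ 2) := by
  refine ⟨1 / 4, by norm_num, fun y hy => ⟨?_, ?_⟩⟩
  · rcases le_total y 2 with hy₂ | hy₂
    · have h := one_sub_besselSeries_zero_le (x := y ^ 2 / 4) (by positivity) (by nlinarith)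
      rw [deriv_besselJ0_sq, besselJ0_eq_besselSeries]
      linarith
    · nlinarith [besselJ0_le_half hy₂, sq_nonneg (deriv besselJ0 y)]
  · nlinarith [neg_half_le_besselJ0 hy, sq_nonneg (deriv besselJ0 y)]
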